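/- arXiv:2008.09754 — 2 statements merged into one kernel-verified Lean document; each statement's English description precedes it below -/
import Mathlib

section
/- For integers m ≥ 2, n ≥ 1 with m+n ≥ 4 and m+n even, the spider Sp(2n+1, 2m+1, n+m+1) has local antimagic chromatic number 4. -/
/-!
Any local antimagic labeling of a spider with `d ≥ 2` legs uses at least `d + 1` colors: the `d`
leg ends are pendant, so their sums are the labels of distinct pendant edges, all at most `|E|`;
the edge labelled `|E|` has an endpoint of degree at least two, whose sum exceeds `|E|`.

For `Sp(2a+1, 2b+1, a+b+1)` with `1 ≤ a ≤ b` and `s = a + b` even, four colors suffice.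
Positions `p ∈ [0, 3s+1]` are sent to labels by the zigzag `p ↦ p` (odd `p`), `p ↦ 3s+2-p`
(even `p`), which turns consecutive positions into label pairs summing to `3s+1` or `3s+3`.
Laying the positions out along the legs (and adding the label `3s+3` at the end of the short
leg), the sums along every leg alternate between `3s+1` and `{3s+3, 4s+4}`, the core gets
`4s+4`, and the three pendant vertices get `3s+3`, `3s+1`, `3s+2`.
-/

open SimpleGraph

/-- The induced vertex sum of an edge labeling. -/
noncomputable def vertexSum {V : Type*} (G : SimpleGraph V) (f : Sym2 V → ℕ) (x : V) : ℕ :=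
  ∑ᶠ y ∈ G.neighborSet x, f s(x, y)

/-- `f` is a local antimagic labeling of `G`. -/
def IsLocalAntimagic {V : Type*} (G : SimpleGraph V) (f : Sym2 V → ℕ) : Prop :=
  Set.BijOn f G.edgeSet (Set.Icc 1 G.edgeSet.ncard) ∧
  ∀ ⦃x y : V⦄, G.Adj x y → vertexSum G f x ≠ vertexSum G f y

/-- The number of distinct induced vertex labels of `f`. -/
noncomputable def colorCount {V : Type*} (G : SimpleGraph V) (f : Sym2 V → ℕ) : ℕ :=
  (Set.range (vertexSum G f)).ncard

/-- The local antimagic chromatic number. -/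
noncomputable def chiLA {V : Type*} (G : SimpleGraph V) : ℕ :=
  sInf {n | ∃ f : Sym2 V → ℕ, IsLocalAntimagic G f ∧ colorCount G f = n}

/-- A pendant vertex: a vertex of degree 1. -/
def IsPendant {V : Type*} (G : SimpleGraph V) (x : V) : Prop :=
  (G.neighborSet x).ncard = 1

/-- A pendant edge: an edge incident to a pendant vertex. -/
def IsPendantEdge {V : Type*} (G : SimpleGraph V) (e : Sym2 V) : Prop :=
  e ∈ G.edgeSet ∧ ∃ x ∈ e, IsPendant G x

/-- The spider graph with `d` legs of lengths `y i`: the core is `none`, and leg `i`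
consists of vertices `some ⟨i, j⟩` for `j : Fin (y i)`, forming a path from the core. -/
def spider (d : ℕ) (y : Fin d → ℕ) : SimpleGraph (Option (Σ i : Fin d, Fin (y i))) :=
  SimpleGraph.fromRel (fun u v =>
    ∃ (i : Fin d) (j : Fin (y i)), (u = none ∧ v = some ⟨i, j⟩ ∧ (j : ℕ) = 0) ∨
      (∃ k : Fin (y i), u = some ⟨i, j⟩ ∧ v = some ⟨i, k⟩ ∧ (j : ℕ) + 1 = (k : ℕ)))

section LocalAntimagic
variable {V : Type*} {G : SimpleGraph V} {f : Sym2 V → ℕ}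

lemma vertexSum_eq_of_neighborSet_eq_singleton {x y : V} (h : G.neighborSet x = {y}) :
    vertexSum G f x = f s(x, y) := by
  rw [vertexSum, h, finsum_mem_singleton]

lemma exists_adj_ne_of_not_isPendant {x y : V} (hxy : G.Adj x y) (hx : ¬ IsPendant G x) :
    ∃ z, G.Adj x z ∧ z ≠ y := by
  by_contra! h
  exact hx (Set.ncard_eq_one.mpr ⟨y, Set.eq_singleton_iff_unique_mem.mpr ⟨hxy, h⟩⟩)

lemma not_isPendant_of_adj_of_adj {x y z : V} (hy : G.Adj x y)
    (hz : G.Adj x z) (hyz : y ≠ z) : ¬ IsPendant G x := by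
  intro hx
  obtain ⟨a, ha⟩ := Set.ncard_eq_one.mp hx
  have hy' : y ∈ G.neighborSet x := hy
  have hz' : z ∈ G.neighborSet x := hz
  rw [ha] at hy' hz'
  exact hyz (hy'.trans hz'.symm)

lemma lt_vertexSum [Finite V] {x y z : V} (hy : G.Adj x y) (hz : G.Adj x z) (hyz : z ≠ y)
    (hpos : 0 < f s(x, z)) : f s(x, y) < vertexSum G f x := by
  classical
  have hfin := (G.neighborSet x).toFinite
  have hsub : ({y, z} : Finset V) ⊆ hfin.toFinset := by
    simpa [Set.insert_subset_iff] using ⟨hy, hz⟩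
  calc f s(x, y) < f s(x, y) + f s(x, z) := by omega
    _ = ∑ w ∈ {y, z}, f s(x, w) := by rw [Finset.sum_pair hyz.symm]
    _ ≤ ∑ w ∈ hfin.toFinset, f s(x, w) := Finset.sum_le_sum_of_subset hsub
    _ = vertexSum G f x := (finsum_mem_eq_finite_toFinset_sum _ hfin).symm

lemma IsPendant.exists_vertexSum_eq {x : V} (hx : IsPendant G x) :
    ∃ y, G.Adj x y ∧ vertexSum G f x = f s(x, y) := by
  obtain ⟨y, hy⟩ := Set.ncard_eq_one.mp hx
  exact ⟨y, (hy.symm ▸ rfl : y ∈ G.neighborSet x), vertexSum_eq_of_neighborSet_eq_singleton hy⟩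

namespace IsLocalAntimagic

lemma pos_of_mem_edgeSet (hf : IsLocalAntimagic G f) {e : Sym2 V} (he : e ∈ G.edgeSet) :
    0 < f e :=
  (hf.1.mapsTo he).1

lemma le_ncard_of_mem_edgeSet (hf : IsLocalAntimagic G f) {e : Sym2 V} (he : e ∈ G.edgeSet) :
    f e ≤ G.edgeSet.ncard :=
  (hf.1.mapsTo he).2

lemma vertexSum_le_ncard_of_isPendant (hf : IsLocalAntimagic G f) {x : V} (hx : IsPendant G x) :
    vertexSum G f x ≤ G.edgeSet.ncard := by
  obtain ⟨y, hxy, hsum⟩ := hx.exists_vertexSum_eq (f := f)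
  exact hsum ▸ hf.le_ncard_of_mem_edgeSet hxy

lemma injOn_vertexSum_setOf_isPendant (hf : IsLocalAntimagic G f)
    (hP : ∀ ⦃x y⦄, G.Adj x y → IsPendant G x → ¬ IsPendant G y) :
    Set.InjOn (vertexSum G f) {x | IsPendant G x} := by
  intro x hx x' hx' hxx'
  obtain ⟨y, hxy, hsum⟩ := IsPendant.exists_vertexSum_eq (f := f) hx
  obtain ⟨y', hxy', hsum'⟩ := IsPendant.exists_vertexSum_eq (f := f) hx'
  rw [hsum, hsum'] at hxx'
  rcases Sym2.eq_iff.mp (hf.1.injOn hxy hxy' hxx') with ⟨rfl, -⟩ | ⟨rfl, rfl⟩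
  · rfl
  · exact absurd hx' (hP hxy hx)

lemma exists_ncard_lt_vertexSum [Finite V] (hf : IsLocalAntimagic G f)
    (hE : G.edgeSet.Nonempty) (hP : ∀ ⦃x y⦄, G.Adj x y → IsPendant G x → ¬ IsPendant G y) :
    ∃ x, G.edgeSet.ncard < vertexSum G f x := by
  obtain ⟨e, he, hfe⟩ := hf.1.surjOn (⟨hE.ncard_pos, le_rfl⟩ : G.edgeSet.ncard ∈ Set.Icc 1 _)
  obtain ⟨x, y, hxy, rfl, hx⟩ : ∃ x y, G.Adj x y ∧ e = s(x, y) ∧ ¬ IsPendant G x := by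
    induction e using Sym2.ind with
    | _ a b =>
      by_cases ha : IsPendant G a
      · exact ⟨b, a, G.adj_symm he, Sym2.eq_swap, hP he ha⟩
      · exact ⟨a, b, he, rfl, ha⟩
  obtain ⟨z, hxz, hzy⟩ := exists_adj_ne_of_not_isPendant hxy hx
  exact ⟨x, hfe ▸ lt_vertexSum hxy hxz hzy (hf.pos_of_mem_edgeSet hxz)⟩

theorem ncard_setOf_isPendant_lt_colorCount [Finite V] (hf : IsLocalAntimagic G f)
    (hE : G.edgeSet.Nonempty) (hP : ∀ ⦃x y⦄, G.Adj x y → IsPendant G x → ¬ IsPendant G y) :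
    {x | IsPendant G x}.ncard < colorCount G f := by
  have hinj := hf.injOn_vertexSum_setOf_isPendant hP
  set P := {x | IsPendant G x}
  obtain ⟨x, hx⟩ := hf.exists_ncard_lt_vertexSum hE hP
  have hnot : vertexSum G f x ∉ vertexSum G f '' P := by
    rintro ⟨x', hx', hxx'⟩
    have := hf.vertexSum_le_ncard_of_isPendant hx'
    omega
  calc P.ncard < (vertexSum G f '' P).ncard + 1 := by
        rw [hinj.ncard_image]; omega
    _ = (insert (vertexSum G f x) (vertexSum G f '' P)).ncard :=
      (Set.ncard_insert_of_notMem hnot).symm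
    _ ≤ colorCount G f := by
      refine Set.ncard_le_ncard ?_
      rintro _ (rfl | ⟨x', -, rfl⟩) <;> exact ⟨_, rfl⟩

end IsLocalAntimagic

lemma chiLA_eq_of_forall_le_colorCount {k : ℕ}
    (hf : IsLocalAntimagic G f) (hfk : colorCount G f = k)
    (hk : ∀ g, IsLocalAntimagic G g → k ≤ colorCount G g) : chiLA G = k :=
  IsLeast.csInf_eq ⟨⟨f, hf, hfk⟩, by rintro _ ⟨g, hg, rfl⟩; exact hk g hg⟩

end LocalAntimagic

namespace Spider
variable {d : ℕ} {y : Fin d → ℕ}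

lemma vertex_ext_iff {v w : Σ i, Fin (y i)} : v = w ↔ v.1 = w.1 ∧ (v.2 : ℕ) = w.2 := by
  obtain ⟨i, j⟩ := v
  obtain ⟨i', j'⟩ := w
  constructor
  · rintro ⟨⟩; exact ⟨rfl, rfl⟩
  · rintro ⟨rfl, h⟩; exact congrArg _ (Fin.ext h)

def parent (w : Σ i, Fin (y i)) : Option (Σ i, Fin (y i)) :=
  if (w.2 : ℕ) = 0 then none else some ⟨w.1, ⟨w.2 - 1, by omega⟩⟩

def depth : Option (Σ i, Fin (y i)) → ℕ
  | none => 0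
  | some w => w.2 + 1

lemma depth_parent (w : Σ i, Fin (y i)) : depth (parent w) + 1 = depth (some w) := by
  unfold parent
  split_ifs <;> simp only [depth] <;> omega

lemma parent_ne_some (w : Σ i, Fin (y i)) : parent w ≠ some w := fun h => by
  have := depth_parent w
  rw [h] at this
  omega

lemma parent_eq_none_iff {w : Σ i, Fin (y i)} : parent w = none ↔ (w.2 : ℕ) = 0 := by
  unfold parent
  split_ifs <;> simp_all

lemma parent_eq_some_iff {v w : Σ i, Fin (y i)} :
    parent v = some w ↔ v.1 = w.1 ∧ (v.2 : ℕ) = w.2 + 1 := by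
  unfold parent
  split_ifs with h
  · simp only [false_iff]
    omega
  · rw [Option.some_inj, vertex_ext_iff]
    constructor <;> rintro ⟨h1, h2⟩ <;> exact ⟨h1, by simp only at h2 ⊢; omega⟩

lemma parent_rel_iff (u v : Option (Σ i, Fin (y i))) :
    (∃ (i : Fin d) (j : Fin (y i)), (u = none ∧ v = some ⟨i, j⟩ ∧ (j : ℕ) = 0) ∨
      (∃ k : Fin (y i), u = some ⟨i, j⟩ ∧ v = some ⟨i, k⟩ ∧ (j : ℕ) + 1 = (k : ℕ))) ↔
    ∃ w, v = some w ∧ u = parent w := by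
  constructor
  · rintro ⟨i, j, ⟨rfl, rfl, hj⟩ | ⟨k, rfl, rfl, hk⟩⟩
    · exact ⟨⟨i, j⟩, rfl, (parent_eq_none_iff.mpr hj).symm⟩
    · exact ⟨⟨i, k⟩, rfl,
        ((parent_eq_some_iff (v := ⟨i, k⟩) (w := ⟨i, j⟩)).mpr ⟨rfl, hk.symm⟩).symm⟩
  · rintro ⟨⟨i, k⟩, rfl, rfl⟩
    by_cases hk : (k : ℕ) = 0
    · exact ⟨i, k, Or.inl ⟨parent_eq_none_iff.mpr hk, rfl, hk⟩⟩
    · refine ⟨i, ⟨k - 1, by omega⟩, Or.inr ⟨k, ?_, rfl, by simp only; omega⟩⟩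
      exact parent_eq_some_iff.mpr ⟨rfl, by simp only; omega⟩

theorem adj_iff {u v : Option (Σ i, Fin (y i))} : (spider d y).Adj u v ↔
    (∃ w, v = some w ∧ u = parent w) ∨ (∃ w, u = some w ∧ v = parent w) := by
  rw [spider, fromRel_adj, parent_rel_iff, parent_rel_iff]
  refine ⟨And.right, fun h => ⟨?_, h⟩⟩
  rintro rfl
  obtain ⟨w, rfl, h⟩ | ⟨w, rfl, h⟩ := h
  exacts [parent_ne_some w h.symm, parent_ne_some w h.symm]

def edge (w : Σ i, Fin (y i)) : Sym2 (Option (Σ i, Fin (y i))) := s(parent w, some w)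

lemma edge_mem_edgeSet (w : Σ i, Fin (y i)) : edge w ∈ (spider d y).edgeSet :=
  adj_iff.mpr (Or.inl ⟨w, rfl, rfl⟩)

lemma edge_injective : Function.Injective (edge (y := y)) := by
  intro v w h
  rcases Sym2.eq_iff.mp h with ⟨-, h⟩ | ⟨hv, hw⟩
  · exact Option.some_injective _ h
  · have := depth_parent v
    have := depth_parent w
    rw [hv] at *
    rw [← hw] at *
    omega

lemma range_edge : Set.range (edge (y := y)) = (spider d y).edgeSet := by
  refine subset_antisymm (Set.range_subset_iff.mpr edge_mem_edgeSet) fun e he => ?_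
  induction e using Sym2.ind with
  | _ u v =>
    obtain ⟨w, rfl, rfl⟩ | ⟨w, rfl, rfl⟩ := adj_iff.mp he
    exacts [⟨w, rfl⟩, ⟨w, Sym2.eq_swap⟩]

lemma ncard_edgeSet : (spider d y).edgeSet.ncard = ∑ i, y i := by
  rw [← range_edge, Set.ncard_range_of_injective edge_injective, Nat.card_sigma]
  simp

lemma neighborSet_none : (spider d y).neighborSet none = some '' {w | parent w = none} := by
  ext v
  simp only [mem_neighborSet, adj_iff, Set.mem_image, Set.mem_ofPred_eq]
  constructor
  · rintro (⟨w, rfl, h⟩ | ⟨w, h, -⟩)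
    exacts [⟨w, h.symm, rfl⟩, absurd h (Option.some_ne_none w).symm]
  · rintro ⟨w, h, rfl⟩
    exact Or.inl ⟨w, rfl, h.symm⟩

lemma neighborSet_some (w : Σ i, Fin (y i)) :
    (spider d y).neighborSet (some w) = insert (parent w) (some '' {v | parent v = some w}) := by
  ext u
  simp only [mem_neighborSet, adj_iff, Set.mem_insert_iff, Set.mem_image, Set.mem_ofPred_eq,
    Option.some_inj]
  constructor
  · rintro (⟨v, rfl, h⟩ | ⟨v, rfl, rfl⟩)
    exacts [Or.inr ⟨v, h.symm, rfl⟩, Or.inl rfl]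
  · rintro (rfl | ⟨v, h, rfl⟩)
    exacts [Or.inr ⟨w, rfl, rfl⟩, Or.inl ⟨v, rfl, h.symm⟩]

section VertexSum
variable (g : Sym2 (Option (Σ i, Fin (y i))) → ℕ)

lemma vertexSum_none_eq_finsum :
    vertexSum (spider d y) g none = ∑ᶠ w ∈ {w | parent w = none}, g (edge w) := by
  rw [vertexSum, neighborSet_none, finsum_mem_image (Option.some_injective _).injOn]
  exact finsum_mem_congr rfl fun w hw => by rw [edge, hw.symm]

lemma vertexSum_some_eq_finsum (w : Σ i, Fin (y i)) :
    vertexSum (spider d y) g (some w) =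
      g (edge w) + ∑ᶠ v ∈ {v | parent v = some w}, g (edge v) := by
  have hparent : parent w ∉ some '' {v | parent v = some w} := by
    rintro ⟨v, hv, hvw⟩
    have := depth_parent v
    have := depth_parent w
    rw [hv] at *
    rw [← hvw] at *
    omega
  rw [vertexSum, neighborSet_some, finsum_mem_insert _ hparent (Set.toFinite _), edge,
    Sym2.eq_swap, finsum_mem_image (Option.some_injective _).injOn]
  exact congrArg _ (finsum_mem_congr rfl fun v hv => by rw [edge, hv.symm])

lemma setOf_parent_eq_none (hy : ∀ i, 0 < y i) :
    {w | parent w = none} = Set.range fun i => (⟨i, ⟨0, hy i⟩⟩ : Σ i, Fin (y i)) := by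
  ext ⟨i, j⟩
  simp only [Set.mem_ofPred_eq, parent_eq_none_iff, Set.mem_range, vertex_ext_iff]
  exact ⟨fun h => ⟨i, rfl, h.symm⟩, fun ⟨_, _, h⟩ => h.symm⟩

lemma setOf_parent_eq_some (i : Fin d) (j : ℕ) (hj : j < y i) :
    {v | parent v = some ⟨i, ⟨j, hj⟩⟩} =
      if h : j + 1 < y i then {⟨i, ⟨j + 1, h⟩⟩} else ∅ := by
  ext ⟨i', k⟩
  simp only [Set.mem_ofPred_eq, parent_eq_some_iff]
  split_ifs with h
  · rw [Set.mem_singleton_iff, vertex_ext_iff]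
  · simp only [Set.mem_empty_iff_false, iff_false, not_and]
    rintro rfl
    omega

theorem vertexSum_none (hy : ∀ i, 0 < y i) :
    vertexSum (spider d y) g none = ∑ i, g (edge ⟨i, ⟨0, hy i⟩⟩) := by
  rw [vertexSum_none_eq_finsum, setOf_parent_eq_none hy, finsum_mem_range,
    finsum_eq_sum_of_fintype]
  exact fun i i' h => (vertex_ext_iff.mp h).1

theorem vertexSum_some (i : Fin d) (j : ℕ) (hj : j < y i) :
    vertexSum (spider d y) g (some ⟨i, ⟨j, hj⟩⟩) =
      g (edge ⟨i, ⟨j, hj⟩⟩) + if h : j + 1 < y i then g (edge ⟨i, ⟨j + 1, h⟩⟩) else 0 := by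
  rw [vertexSum_some_eq_finsum, setOf_parent_eq_some]
  split_ifs
  · rw [finsum_mem_singleton]
  · rw [finsum_mem_empty]

end VertexSum

lemma isPendant_legEnd (i : Fin d) (hy : 0 < y i) :
    IsPendant (spider d y) (some ⟨i, ⟨y i - 1, by omega⟩⟩) := by
  rw [IsPendant, neighborSet_some, setOf_parent_eq_some, dif_neg (by omega), Set.image_empty,
    insert_empty_eq, Set.ncard_singleton]

lemma not_isPendant_parent (hd : 2 ≤ d) (hy : ∀ i, 0 < y i) (w : Σ i, Fin (y i)) :
    ¬ IsPendant (spider d y) (parent w) := by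
  cases h : parent w with
  | none =>
    refine not_isPendant_of_adj_of_adj (y := some ⟨⟨0, by omega⟩, ⟨0, hy _⟩⟩)
      (z := some ⟨⟨1, by omega⟩, ⟨0, hy _⟩⟩) (adj_iff.mpr (Or.inl ⟨_, rfl, rfl⟩))
      (adj_iff.mpr (Or.inl ⟨_, rfl, rfl⟩)) ?_
    simp
  | some v =>
    refine not_isPendant_of_adj_of_adj (y := some w) (z := parent v)
      (adj_iff.mpr (Or.inl ⟨w, rfl, h.symm⟩)) (adj_iff.mpr (Or.inr ⟨v, rfl, rfl⟩)) fun hw => ?_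
    have := depth_parent w
    have := depth_parent v
    rw [h] at *
    rw [← hw] at *
    omega

theorem lt_colorCount {f : Sym2 (Option (Σ i, Fin (y i))) → ℕ} (hd : 2 ≤ d)
    (hy : ∀ i, 0 < y i) (hf : IsLocalAntimagic (spider d y) f) :
    d < colorCount (spider d y) f := by
  have hP : ∀ ⦃u v⦄, (spider d y).Adj u v → IsPendant (spider d y) u →
      ¬ IsPendant (spider d y) v := by
    intro u v huv hu hv
    obtain ⟨w, -, rfl⟩ | ⟨w, -, rfl⟩ := adj_iff.mp huv
    exacts [not_isPendant_parent hd hy w hu, not_isPendant_parent hd hy w hv]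
  have hends : d ≤ {x | IsPendant (spider d y) x}.ncard := by
    let legEnd : Fin d → Option (Σ i, Fin (y i)) :=
      fun i => some ⟨i, ⟨y i - 1, by have := hy i; omega⟩⟩
    have hinj : Function.Injective legEnd := fun i i' h =>
      (vertex_ext_iff.mp (Option.some_injective _ h)).1
    calc d = (Set.range legEnd).ncard := by
          rw [Set.ncard_range_of_injective hinj, Nat.card_eq_fintype_card, Fintype.card_fin]
      _ ≤ _ := Set.ncard_le_ncard (Set.range_subset_iff.mpr fun i => isPendant_legEnd i (hy i))
  exact hends.trans_lt
    (hf.ncard_setOf_isPendant_lt_colorCount ⟨_, edge_mem_edgeSet ⟨⟨0, by omega⟩, ⟨0, hy _⟩⟩⟩ hP)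

lemma forall_adj_iff {P : Option (Σ i, Fin (y i)) → Option (Σ i, Fin (y i)) → Prop}
    (hP : ∀ u v, P u v → P v u) :
    (∀ ⦃u v⦄, (spider d y).Adj u v → P u v) ↔ ∀ w, P (parent w) (some w) := by
  refine ⟨fun h w => h (adj_iff.mpr (Or.inl ⟨w, rfl, rfl⟩)), fun h u v huv => ?_⟩
  obtain ⟨w, rfl, rfl⟩ | ⟨w, rfl, rfl⟩ := adj_iff.mp huv
  exacts [h w, hP _ _ (h w)]

/-- The edge labeling giving the edge from `(i, j - 1)` (or the core) to `(i, j)` the label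
`lab i j`. -/
noncomputable def labeling (lab : Fin d → ℕ → ℕ) : Sym2 (Option (Σ i, Fin (y i))) → ℕ :=
  Function.extend edge (fun w => lab w.1 w.2) 0

section Labeling
variable (lab : Fin d → ℕ → ℕ)

lemma labeling_edge (w : Σ i, Fin (y i)) : labeling lab (edge w) = lab w.1 w.2 :=
  edge_injective.extend_apply _ _ _

lemma bijOn_labeling (hmaps : ∀ i j, j < y i → lab i j ∈ Set.Icc 1 (∑ i, y i))
    (hinj : ∀ i i' j j', j < y i → j' < y i' → lab i j = lab i' j' → i = i' ∧ j = j') :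
    Set.BijOn (labeling lab) (spider d y).edgeSet
      (Set.Icc 1 (spider d y).edgeSet.ncard) := by
  let L : (Σ i, Fin (y i)) → ℕ := fun w => lab w.1 w.2
  have hL : Function.Injective L := fun v w h =>
    vertex_ext_iff.mpr (hinj _ _ _ _ v.2.isLt w.2.isLt h)
  have himage : L '' Set.univ = Set.Icc 1 (∑ i, y i) := by
    refine Set.eq_of_subset_of_ncard_le ?_ ?_ (Set.toFinite _)
    · rintro _ ⟨w, -, rfl⟩
      exact hmaps _ _ w.2.isLt
    · rw [Set.ncard_Icc_nat, hL.injOn.ncard_image, Set.ncard_univ, Nat.card_sigma]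
      simp
  rw [ncard_edgeSet, ← himage, ← range_edge, ← Set.image_univ,
    ← Set.bijOn_comp_iff edge_injective.injOn]
  convert hL.injOn.bijOn_image using 1
  exact funext (labeling_edge lab)

lemma vertexSum_labeling_none (hy : ∀ i, 0 < y i) :
    vertexSum (spider d y) (labeling lab) none = ∑ i, lab i 0 := by
  simp only [vertexSum_none _ hy, labeling_edge]

lemma vertexSum_labeling_some (i : Fin d) (j : ℕ) (hj : j < y i) :
    vertexSum (spider d y) (labeling lab) (some ⟨i, ⟨j, hj⟩⟩) =
      lab i j + if j + 1 < y i then lab i (j + 1) else 0 := by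
  rw [vertexSum_some]
  split_ifs <;> simp only [labeling_edge]

end Labeling

namespace Construction
variable {a b : ℕ}

def zigzag (a b p : ℕ) : ℕ := if p % 2 = 1 then p else 3 * (a + b) + 2 - p

def legLength (a b : ℕ) : Fin 3 → ℕ := ![2 * a + 1, 2 * b + 1, a + b + 1]

/-- With `s = a + b`, the short leg `0` runs through the positions `3a+b, …, a+b+1` and ends with
the extra label `3s+3`; the long leg `1` runs through `a+3b+2, …, 3a+b+1` and then
`a+3b+3, …, 3s+1`; the middle leg `2` runs through `a+b, …, 0`. -/
def legLabel (a b : ℕ) : Fin 3 → ℕ → ℕ := ![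
  fun j => if j = 2 * a then 3 * (a + b) + 3 else zigzag a b (3 * a + b - j),
  fun j => if j + 2 * a < 2 * b + 2 then zigzag a b (a + 3 * b + 2 - j)
    else zigzag a b (3 * a + b + 1 + j),
  fun j => zigzag a b (a + b - j)]

def legSum (a b : ℕ) (k : Fin 3) (j : ℕ) : ℕ :=
  legLabel a b k j + if j + 1 < legLength a b k then legLabel a b k (j + 1) else 0

lemma legLength_pos (k : Fin 3) : 0 < legLength a b k := by
  fin_cases k <;> simp [legLength]

lemma sum_legLength : ∑ k, legLength a b k = 3 * (a + b) + 3 := by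
  simp [Fin.sum_univ_three, legLength]
  ring

lemma legLabel_mem_Icc (ha : 1 ≤ a) (k : Fin 3) (j : ℕ) (hj : j < legLength a b k) :
    legLabel a b k j ∈ Set.Icc 1 (3 * (a + b) + 3) := by
  fin_cases k <;> simp [legLabel, legLength, zigzag] at * <;> split_ifs <;> omega

lemma legLabel_inj (hs : Even (a + b)) {k k' : Fin 3} {j j' : ℕ}
    (hj : j < legLength a b k) (hj' : j' < legLength a b k')
    (h : legLabel a b k j = legLabel a b k' j') : k = k' ∧ j = j' := by
  have := Nat.even_iff.mp hs
  fin_cases k <;> fin_cases k' <;> simp [legLabel, legLength, zigzag] at * <;>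
    split_ifs at h <;> omega

lemma sum_legLabel_zero (ha : 1 ≤ a) (hab : a ≤ b) (hs : Even (a + b)) :
    ∑ k, legLabel a b k 0 = 4 * (a + b) + 4 := by
  have := Nat.even_iff.mp hs
  simp [Fin.sum_univ_three, legLabel, zigzag]
  split_ifs <;> omega

lemma legSum_zero (ha : 1 ≤ a) (hs : Even (a + b)) (k : Fin 3) :
    legSum a b k 0 = 3 * (a + b) + 1 := by
  have := Nat.even_iff.mp hs
  fin_cases k <;> simp [legSum, legLabel, legLength, zigzag] at * <;> split_ifs <;> omega

lemma legSum_ne_succ (hs : Even (a + b)) (k : Fin 3) (j : ℕ) (hj : j + 1 < legLength a b k) :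
    legSum a b k j ≠ legSum a b k (j + 1) := by
  have := Nat.even_iff.mp hs
  fin_cases k <;> simp [legSum, legLabel, legLength, zigzag] at * <;> split_ifs <;> omega

lemma legSum_mem (ha : 1 ≤ a) (hs : Even (a + b)) (k : Fin 3) (j : ℕ)
    (hj : j < legLength a b k) :
    legSum a b k j ∈
      ({3 * (a + b) + 1, 3 * (a + b) + 2, 3 * (a + b) + 3, 4 * (a + b) + 4} : Finset ℕ) := by
  have := Nat.even_iff.mp hs
  fin_cases k <;> simp [legSum, legLabel, legLength, zigzag] at * <;> split_ifs <;> omega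

variable (σ : Equiv.Perm (Fin 3))

/-- The labeling of `Sp(2a+1, 2b+1, a+b+1)` with its legs listed in the order `σ`. -/
noncomputable def legLabeling (a b : ℕ) :
    Sym2 (Option (Σ i, Fin ((legLength a b ∘ σ) i))) → ℕ :=
  labeling fun i => legLabel a b (σ i)

lemma vertexSum_legLabeling_none (ha : 1 ≤ a) (hab : a ≤ b) (hs : Even (a + b)) :
    vertexSum (spider 3 (legLength a b ∘ σ)) (legLabeling σ a b) none = 4 * (a + b) + 4 := by
  rw [legLabeling, vertexSum_labeling_none (y := legLength a b ∘ σ) _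
    fun i => legLength_pos (σ i),
    Equiv.sum_comp σ fun k => legLabel a b k 0, sum_legLabel_zero ha hab hs]

lemma vertexSum_legLabeling_some (i : Fin 3) (j : ℕ) (hj : j < legLength a b (σ i)) :
    vertexSum (spider 3 (legLength a b ∘ σ)) (legLabeling σ a b) (some ⟨i, ⟨j, hj⟩⟩) =
      legSum a b (σ i) j :=
  vertexSum_labeling_some _ i j hj

theorem isLocalAntimagic_legLabeling (ha : 1 ≤ a) (hab : a ≤ b) (hs : Even (a + b)) :
    IsLocalAntimagic (spider 3 (legLength a b ∘ σ)) (legLabeling σ a b) := by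
  refine ⟨bijOn_labeling _ ?_ ?_, (forall_adj_iff fun _ _ h => h.symm).mpr ?_⟩
  · intro i j hj
    convert legLabel_mem_Icc ha (σ i) j hj using 2
    exact (Equiv.sum_comp σ (legLength a b)).trans sum_legLength
  · intro i i' j j' hj hj' h
    obtain ⟨hi, rfl⟩ := legLabel_inj hs hj hj' h
    exact ⟨σ.injective hi, rfl⟩
  · rintro ⟨i, ⟨j, hj⟩⟩
    rw [vertexSum_legLabeling_some]
    rcases j with _ | j
    · rw [parent_eq_none_iff.mpr rfl, vertexSum_legLabeling_none σ ha hab hs,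
        legSum_zero ha hs]
      omega
    · rw [show parent ⟨i, ⟨j + 1, hj⟩⟩ = some ⟨i, ⟨j, by omega⟩⟩ from
        parent_eq_some_iff.mpr ⟨rfl, rfl⟩, vertexSum_legLabeling_some]
      exact legSum_ne_succ hs _ j hj

theorem colorCount_legLabeling_le (ha : 1 ≤ a) (hab : a ≤ b) (hs : Even (a + b)) :
    colorCount (spider 3 (legLength a b ∘ σ)) (legLabeling σ a b) ≤ 4 := by
  have hrange : Set.range (vertexSum (spider 3 (legLength a b ∘ σ)) (legLabeling σ a b)) ⊆
      ↑({3 * (a + b) + 1, 3 * (a + b) + 2, 3 * (a + b) + 3, 4 * (a + b) + 4} : Finset ℕ) := by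
    rintro _ ⟨_ | ⟨i, ⟨j, hj⟩⟩, rfl⟩
    · rw [vertexSum_legLabeling_none σ ha hab hs]
      simp
    · rw [vertexSum_legLabeling_some]
      exact legSum_mem ha hs _ j hj
  exact (Set.ncard_le_ncard hrange).trans ((Set.ncard_coe_finset _).trans_le Finset.card_le_four)

theorem chiLA_spider_legLength_comp (ha : 1 ≤ a) (hab : a ≤ b) (hs : Even (a + b)) :
    chiLA (spider 3 (legLength a b ∘ σ)) = 4 := by
  have hlower : ∀ g, IsLocalAntimagic (spider 3 (legLength a b ∘ σ)) g →
      4 ≤ colorCount (spider 3 (legLength a b ∘ σ)) g :=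
    fun g hg => lt_colorCount (by norm_num) (fun i => legLength_pos (σ i)) hg
  have hf := isLocalAntimagic_legLabeling σ ha hab hs
  exact chiLA_eq_of_forall_le_colorCount hf
    ((colorCount_legLabeling_le σ ha hab hs).antisymm (hlower _ hf)) hlower

end Construction

end Spider

theorem stmt17_general (m n : ℕ) (hm : 2 ≤ m) (hn : 1 ≤ n)
    (he : Even (m + n)) :
    chiLA (spider 3 ![2 * n + 1, 2 * m + 1, n + m + 1]) = 4 := by
  let σ : Equiv.Perm (Fin 3) := if n ≤ m then 1 else Equiv.swap 0 1
  have hlegs : ![2 * n + 1, 2 * m + 1, n + m + 1] =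
      Spider.Construction.legLength (min n m) (max n m) ∘ σ := by
    funext i
    by_cases h : n ≤ m <;> fin_cases i <;>
      simp [σ, h, Spider.Construction.legLength, Equiv.swap_apply_def] <;> omega
  rw [hlegs]
  exact Spider.Construction.chiLA_spider_legLength_comp σ (by omega) min_le_max
    (by rwa [min_add_max, add_comm])

theorem stmt17 (m n : ℕ) (hm : 2 ≤ m) (hn : 1 ≤ n) (hmn : 4 ≤ m + n)
    (he : Even (m + n)) :
    chiLA (spider 3 ![2 * n + 1, 2 * m + 1, n + m + 1]) = 4 :=
  stmt17_general m n hm hn he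
end

section
/- For all integers n ≥ 0 and m ≥ 1, the spider Sp(2n+1, 2m+1, 2m+1) with two equal odd legs has local antimagic chromatic number 4. -/
open SimpleGraph

namespace Stmt18

variable {y : Fin 3 → ℕ}

abbrev SpV (y : Fin 3 → ℕ) := Option (Σ i : Fin 3, Fin (y i))

lemma sigma_ext {a b : Σ i : Fin 3, Fin (y i)} (h1 : a.1 = b.1) (h2 : (a.2 : ℕ) = (b.2 : ℕ)) :
    a = b := by
  obtain ⟨i, j⟩ := a; obtain ⟨i', j'⟩ := b
  dsimp at h1 h2
  subst h1
  rw [Fin.ext h2]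

lemma some_ne_of_fst {a b : Σ i : Fin 3, Fin (y i)} (h : a.1 ≠ b.1) :
    (some a : SpV y) ≠ some b := by
  intro hc
  exact h (congrArg (Sigma.fst) (Option.some_injective _ hc))

lemma some_ne_of_val {a b : Σ i : Fin 3, Fin (y i)} (h : (a.2 : ℕ) ≠ (b.2 : ℕ)) :
    (some a : SpV y) ≠ some b := by
  intro hc
  obtain rfl := Option.some_injective _ hc
  exact h rfl

lemma finsum_mem_triple {α : Type*} {a b c : α} (hab : a ≠ b) (hac : a ≠ c) (hbc : b ≠ c)
    (f : α → ℕ) : ∑ᶠ i ∈ ({a, b, c} : Set α), f i = f a + f b + f c := by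
  classical
  have h : ({a, b, c} : Set α) = (({a, b, c} : Finset α) : Set α) := by simp
  rw [h, finsum_mem_coe_finset,
    Finset.sum_insert (by simp [hab, hac]), Finset.sum_insert (by simp [hbc]),
    Finset.sum_singleton]
  ring

lemma adj_none_some (a : Σ i : Fin 3, Fin (y i)) :
    (spider 3 y).Adj none (some a) ↔ (a.2 : ℕ) = 0 := by
  rw [spider, fromRel_adj]
  constructor
  · rintro ⟨-, h | h⟩
    · obtain ⟨i, j, h⟩ := h
      rcases h with ⟨-, h2, h3⟩ | ⟨k, h1, -, -⟩
      · obtain rfl : a = ⟨i, j⟩ := Option.some_injective _ h2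
        exact h3
      · exact absurd h1 (by simp)
    · obtain ⟨i, j, h⟩ := h
      rcases h with ⟨h1, -, -⟩ | ⟨k, -, h2, -⟩
      · exact absurd h1 (by simp)
      · exact absurd h2 (by simp)
  · intro h
    refine ⟨by simp, Or.inl ⟨a.1, a.2, Or.inl ⟨rfl, by rw [Sigma.eta], h⟩⟩⟩

lemma adj_some_some (a b : Σ i : Fin 3, Fin (y i)) :
    (spider 3 y).Adj (some a) (some b) ↔
      a.1 = b.1 ∧ ((a.2 : ℕ) + 1 = (b.2 : ℕ) ∨ (b.2 : ℕ) + 1 = (a.2 : ℕ)) := by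
  obtain ⟨ia, ja⟩ := a; obtain ⟨ib, jb⟩ := b
  rw [spider, fromRel_adj]
  constructor
  · rintro ⟨hne, h | h⟩ <;> obtain ⟨i, j, h⟩ := h
    · rcases h with ⟨h1, -, -⟩ | ⟨k, h1, h2, h3⟩
      · exact absurd h1 (by simp)
      · obtain ⟨rfl, hj⟩ := Sigma.mk.inj_iff.mp (Option.some_injective _ h1)
        obtain rfl := eq_of_heq hj
        obtain ⟨rfl, hk⟩ := Sigma.mk.inj_iff.mp (Option.some_injective _ h2)
        obtain rfl := eq_of_heq hk
        exact ⟨rfl, Or.inl h3⟩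
    · rcases h with ⟨h1, -, -⟩ | ⟨k, h1, h2, h3⟩
      · exact absurd h1 (by simp)
      · obtain ⟨rfl, hj⟩ := Sigma.mk.inj_iff.mp (Option.some_injective _ h1)
        obtain rfl := eq_of_heq hj
        obtain ⟨rfl, hk⟩ := Sigma.mk.inj_iff.mp (Option.some_injective _ h2)
        obtain rfl := eq_of_heq hk
        exact ⟨rfl, Or.inr h3⟩
  · rintro ⟨h1, h2⟩
    dsimp at h1 h2
    subst h1
    have hne : (some (⟨ia, ja⟩ : Σ i : Fin 3, Fin (y i)) : SpV y) ≠ some ⟨ia, jb⟩ :=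
      some_ne_of_val (show (ja : ℕ) ≠ (jb : ℕ) by omega)
    refine ⟨hne, ?_⟩
    rcases h2 with h2 | h2
    · exact Or.inl ⟨ia, ja, Or.inr ⟨jb, rfl, rfl, h2⟩⟩
    · exact Or.inr ⟨ia, jb, Or.inr ⟨ja, rfl, rfl, h2⟩⟩

lemma not_adj_none_none : ¬ (spider 3 y).Adj none none := SimpleGraph.irrefl _

lemma adj_some_none (a : Σ i : Fin 3, Fin (y i)) :
    (spider 3 y).Adj (some a) none ↔ (a.2 : ℕ) = 0 := by
  rw [adj_comm, adj_none_some]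

end Stmt18
namespace Stmt18

variable {y : Fin 3 → ℕ}

lemma some_eq_mk {b : Σ i : Fin 3, Fin (y i)} {i : Fin 3} {k : ℕ} (hk : k < y i)
    (h1 : b.1 = i) (h2 : (b.2 : ℕ) = k) : some b = (some ⟨i, ⟨k, hk⟩⟩ : SpV y) :=
  congrArg some (sigma_ext h1 h2)

lemma ylt_of_fst_eq {a b : Σ i : Fin 3, Fin (y i)} (h : a.1 = b.1) :
    (b.2 : ℕ) < y a.1 := by
  have hb := b.2.isLt
  have : y a.1 = y b.1 := congrArg y h
  omega

lemma nbhd_core (h0 : 0 < y 0) (h1 : 0 < y 1) (h2 : 0 < y 2) :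
    (spider 3 y).neighborSet none =
      {some ⟨0, ⟨0, h0⟩⟩, some ⟨1, ⟨0, h1⟩⟩, some ⟨2, ⟨0, h2⟩⟩} := by
  ext x
  simp only [mem_neighborSet, Set.mem_insert_iff, Set.mem_singleton_iff]
  cases x with
  | none => simp [not_adj_none_none]
  | some b =>
    rw [adj_none_some]
    constructor
    · intro hj
      obtain ⟨i, j⟩ := b
      dsimp at hj
      fin_cases i
      · exact Or.inl (some_eq_mk h0 rfl hj)
      · exact Or.inr (Or.inl (some_eq_mk h1 rfl hj))
      · exact Or.inr (Or.inr (some_eq_mk h2 rfl hj))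
    · rintro (h | h | h) <;>
      · obtain rfl := Option.some_injective _ h
        rfl

lemma nbhd_leaf0 (a : Σ i : Fin 3, Fin (y i)) (ha : (a.2 : ℕ) = 0) (hy : y a.1 = 1) :
    (spider 3 y).neighborSet (some a) = {none} := by
  ext x
  simp only [mem_neighborSet, Set.mem_singleton_iff]
  cases x with
  | none => simp [adj_some_none, ha]
  | some b =>
    rw [adj_some_some]
    simp only [reduceCtorEq, iff_false, not_and]
    intro h1
    have hb := ylt_of_fst_eq h1
    omega

lemma nbhd_start (a : Σ i : Fin 3, Fin (y i)) (ha : (a.2 : ℕ) = 0) (hy : 2 ≤ y a.1) :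
    (spider 3 y).neighborSet (some a) =
      {none, some ⟨a.1, ⟨1, by omega⟩⟩} := by
  ext x
  simp only [mem_neighborSet, Set.mem_insert_iff, Set.mem_singleton_iff]
  cases x with
  | none => simp [adj_some_none, ha]
  | some b =>
    rw [adj_some_some]
    simp only [reduceCtorEq, false_or]
    constructor
    · rintro ⟨h1, h2 | h2⟩
      · exact some_eq_mk (by omega) h1.symm (by omega)
      · omega
    · intro h
      obtain rfl := Option.some_injective _ h
      exact ⟨rfl, Or.inl (by simpa using ha)⟩

lemma nbhd_mid (a : Σ i : Fin 3, Fin (y i)) (ha : 1 ≤ (a.2 : ℕ)) (hy : (a.2 : ℕ) + 1 < y a.1) :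
    (spider 3 y).neighborSet (some a) =
      {some ⟨a.1, ⟨(a.2 : ℕ) - 1, by omega⟩⟩, some ⟨a.1, ⟨(a.2 : ℕ) + 1, hy⟩⟩} := by
  ext x
  simp only [mem_neighborSet, Set.mem_insert_iff, Set.mem_singleton_iff]
  cases x with
  | none => simp [adj_some_none]; omega
  | some b =>
    rw [adj_some_some]
    constructor
    · rintro ⟨h1, h2 | h2⟩
      · exact Or.inr (some_eq_mk hy h1.symm (by omega))
      · exact Or.inl (some_eq_mk (by omega) h1.symm (by omega))
    · rintro (h | h) <;>
      · obtain rfl := Option.some_injective _ h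
        exact ⟨rfl, by dsimp; omega⟩

lemma nbhd_leaf (a : Σ i : Fin 3, Fin (y i)) (ha : 1 ≤ (a.2 : ℕ)) (hy : (a.2 : ℕ) + 1 = y a.1) :
    (spider 3 y).neighborSet (some a) =
      {some ⟨a.1, ⟨(a.2 : ℕ) - 1, by omega⟩⟩} := by
  ext x
  simp only [mem_neighborSet, Set.mem_singleton_iff]
  cases x with
  | none => simp [adj_some_none]; omega
  | some b =>
    rw [adj_some_some]
    constructor
    · rintro ⟨h1, h2 | h2⟩
      · have hb := ylt_of_fst_eq h1
        omega
      · exact some_eq_mk (by omega) h1.symm (by omega)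
    · intro h
      obtain rfl := Option.some_injective _ h
      exact ⟨rfl, by dsimp; omega⟩

end Stmt18
namespace Stmt18

variable {y : Fin 3 → ℕ}

lemma fst_of_some_eq {a b : Σ i : Fin 3, Fin (y i)} (h : (some a : SpV y) = some b) :
    a.1 = b.1 := congrArg Sigma.fst (Option.some_injective _ h)

lemma val_of_some_eq {a b : Σ i : Fin 3, Fin (y i)} (h : (some a : SpV y) = some b) :
    (a.2 : ℕ) = (b.2 : ℕ) := congrArg (fun x => ((x.2 : ℕ) : ℕ)) (Option.some_injective _ h)

/-- Edge descriptor: edge number `d.2` (0-indexed) on leg `d.1`. -/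
def D (d : Σ i : Fin 3, Fin (y i)) : Sym2 (SpV y) :=
  if h : (d.2 : ℕ) = 0 then s(none, some d)
  else s(some ⟨d.1, ⟨(d.2 : ℕ) - 1, Nat.lt_of_le_of_lt (Nat.sub_le _ _) d.2.isLt⟩⟩, some d)

lemma D_val0 (d : Σ i : Fin 3, Fin (y i)) (h : (d.2 : ℕ) = 0) :
    D (y := y) d = s(none, some d) := dif_pos h

lemma D_valpos (d : Σ i : Fin 3, Fin (y i)) (h : (d.2 : ℕ) ≠ 0) :
    D (y := y) d = s(some ⟨d.1, ⟨(d.2 : ℕ) - 1,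
      Nat.lt_of_le_of_lt (Nat.sub_le _ _) d.2.isLt⟩⟩, some d) := dif_neg h

lemma mem_edgeSet_iff (e : Sym2 (SpV y)) :
    e ∈ (spider 3 y).edgeSet ↔ ∃ d, D (y := y) d = e := by
  induction e using Sym2.ind with
  | _ u v =>
    rw [SimpleGraph.mem_edgeSet]
    constructor
    · intro hadj
      cases u with
      | none =>
        cases v with
        | none => exact absurd hadj not_adj_none_none
        | some b =>
          rw [adj_none_some] at hadj
          exact ⟨b, D_val0 b hadj⟩
      | some a =>
        cases v with
        | none =>
          rw [adj_some_none] at hadj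
          exact ⟨a, by rw [D_val0 a hadj, Sym2.eq_swap]⟩
        | some b =>
          rw [adj_some_some] at hadj
          obtain ⟨h1, h2 | h2⟩ := hadj
          · refine ⟨b, ?_⟩
            rw [D_valpos b (by omega)]
            have hprev : (some a : SpV y) = some ⟨b.1, ⟨(b.2 : ℕ) - 1,
                Nat.lt_of_le_of_lt (Nat.sub_le _ _) b.2.isLt⟩⟩ :=
              some_eq_mk _ h1 (by omega)
            rw [← hprev]
          · refine ⟨a, ?_⟩
            rw [D_valpos a (by omega)]
            have hprev : (some b : SpV y) = some ⟨a.1, ⟨(a.2 : ℕ) - 1,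
                Nat.lt_of_le_of_lt (Nat.sub_le _ _) a.2.isLt⟩⟩ :=
              some_eq_mk _ h1.symm (by omega)
            rw [← hprev]
            exact Sym2.eq_swap
    · rintro ⟨d, h⟩
      rw [← SimpleGraph.mem_edgeSet, ← h]
      by_cases hd : (d.2 : ℕ) = 0
      · rw [D_val0 d hd, SimpleGraph.mem_edgeSet, adj_none_some]
        exact hd
      · rw [D_valpos d hd, SimpleGraph.mem_edgeSet, adj_some_some]
        exact ⟨rfl, Or.inl (by dsimp; omega)⟩

lemma D_inj : Function.Injective (D (y := y)) := by
  intro d d' h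
  by_cases h1 : (d.2 : ℕ) = 0 <;> by_cases h2 : (d'.2 : ℕ) = 0
  · rw [D_val0 d h1, D_val0 d' h2] at h
    rcases Sym2.eq_iff.mp h with ⟨-, hh⟩ | ⟨hh, -⟩
    · exact Option.some_injective _ hh
    · exact absurd hh (by simp)
  · rw [D_val0 d h1, D_valpos d' h2] at h
    rcases Sym2.eq_iff.mp h with ⟨hh, -⟩ | ⟨hh, -⟩ <;> exact absurd hh (by simp)
  · rw [D_valpos d h1, D_val0 d' h2] at h
    rcases Sym2.eq_iff.mp h with ⟨hh, -⟩ | ⟨-, hh⟩ <;> exact absurd hh (by simp)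
  · rw [D_valpos d h1, D_valpos d' h2] at h
    rcases Sym2.eq_iff.mp h with ⟨-, hh⟩ | ⟨ha, hb⟩
    · exact Option.some_injective _ hh
    · have e1 := fst_of_some_eq ha
      have e2 := val_of_some_eq ha
      have e3 := val_of_some_eq hb
      dsimp at e1 e2 e3
      omega

lemma edgeSet_eq : (spider 3 y).edgeSet = Set.range (D (y := y)) := by
  ext e
  rw [mem_edgeSet_iff]
  exact ⟨fun ⟨d, hd⟩ => ⟨d, hd⟩, fun ⟨d, hd⟩ => ⟨d, hd⟩⟩

lemma edgeSet_ncard : (spider 3 y).edgeSet.ncard = y 0 + y 1 + y 2 := by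
  rw [edgeSet_eq, ← Set.image_univ, Set.ncard_image_of_injective _ D_inj, Set.ncard_univ,
    Nat.card_eq_fintype_card, Fintype.card_sigma]
  simp [Fin.sum_univ_three]

/-- The generic edge-label function determined by per-leg labels `ℓ i j`
(`i` = leg, `j` = 0-indexed edge number along the leg). -/
def gF (ℓ : ℕ → ℕ → ℕ) : SpV y → SpV y → ℕ
  | none, none => 0
  | none, some b => if (b.2 : ℕ) = 0 then ℓ b.1.val 0 else 0
  | some a, none => if (a.2 : ℕ) = 0 then ℓ a.1.val 0 else 0
  | some a, some b =>
      if a.1 = b.1 then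
        (if (a.2 : ℕ) + 1 = (b.2 : ℕ) then ℓ a.1.val (b.2 : ℕ)
         else if (b.2 : ℕ) + 1 = (a.2 : ℕ) then ℓ a.1.val (a.2 : ℕ) else 0)
      else 0

lemma gF_symm (ℓ : ℕ → ℕ → ℕ) (u v : SpV y) : gF ℓ u v = gF ℓ v u := by
  cases u with
  | none => cases v with
    | none => rfl
    | some b => rfl
  | some a => cases v with
    | none => rfl
    | some b =>
      simp only [gF]
      rcases eq_or_ne a.1 b.1 with hi | hi
      · rw [if_pos hi, if_pos hi.symm]
        split_ifs <;> first | omega | exact congrFun (congrArg ℓ (congrArg Fin.val hi)) _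
      · rw [if_neg hi, if_neg (Ne.symm hi)]

/-- The global edge labeling as a function on `Sym2`. -/
def FF (ℓ : ℕ → ℕ → ℕ) : Sym2 (SpV y) → ℕ :=
  Sym2.lift ⟨fun u v => gF ℓ u v, fun u v => gF_symm ℓ u v⟩

lemma FF_mk (ℓ : ℕ → ℕ → ℕ) (u v : SpV y) : FF ℓ s(u, v) = gF ℓ u v := rfl

lemma FF_D (ℓ : ℕ → ℕ → ℕ) (d : Σ i : Fin 3, Fin (y i)) :
    FF (y := y) ℓ (D d) = ℓ d.1.val (d.2 : ℕ) := by
  by_cases h : (d.2 : ℕ) = 0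
  · rw [D_val0 d h, FF_mk, gF, if_pos h, h]
  · rw [D_valpos d h, FF_mk, gF]
    rw [if_pos rfl]
    dsimp
    rw [if_pos (by omega)]

/- vertex sum formulas for an arbitrary edge weighting `f` -/

lemma vertexSum_core (h0 : 0 < y 0) (h1 : 0 < y 1) (h2 : 0 < y 2) (f : Sym2 (SpV y) → ℕ) :
    vertexSum (spider 3 y) f none =
      f s(none, some ⟨0, ⟨0, h0⟩⟩) + f s(none, some ⟨1, ⟨0, h1⟩⟩) +
        f s(none, some ⟨2, ⟨0, h2⟩⟩) := by
  have hd1 : (some ⟨0, ⟨0, h0⟩⟩ : SpV y) ≠ some ⟨1, ⟨0, h1⟩⟩ := some_ne_of_fst (by dsimp; decide)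
  have hd2 : (some ⟨0, ⟨0, h0⟩⟩ : SpV y) ≠ some ⟨2, ⟨0, h2⟩⟩ := some_ne_of_fst (by dsimp; decide)
  have hd3 : (some ⟨1, ⟨0, h1⟩⟩ : SpV y) ≠ some ⟨2, ⟨0, h2⟩⟩ := some_ne_of_fst (by dsimp; decide)
  rw [vertexSum, nbhd_core h0 h1 h2, finsum_mem_triple hd1 hd2 hd3]

lemma vertexSum_leaf0 (a : Σ i : Fin 3, Fin (y i)) (ha : (a.2 : ℕ) = 0) (hy : y a.1 = 1)
    (f : Sym2 (SpV y) → ℕ) :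
    vertexSum (spider 3 y) f (some a) = f s(some a, none) := by
  rw [vertexSum, nbhd_leaf0 a ha hy, finsum_mem_singleton]

lemma vertexSum_start (a : Σ i : Fin 3, Fin (y i)) (ha : (a.2 : ℕ) = 0) (hy : 2 ≤ y a.1)
    (f : Sym2 (SpV y) → ℕ) :
    vertexSum (spider 3 y) f (some a) =
      f s(some a, none) + f s(some a, some ⟨a.1, ⟨1, by omega⟩⟩) := by
  rw [vertexSum, nbhd_start a ha hy, finsum_mem_pair (by simp)]

lemma vertexSum_mid (a : Σ i : Fin 3, Fin (y i)) (ha : 1 ≤ (a.2 : ℕ))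
    (hy : (a.2 : ℕ) + 1 < y a.1) (f : Sym2 (SpV y) → ℕ) :
    vertexSum (spider 3 y) f (some a) =
      f s(some a, some ⟨a.1, ⟨(a.2 : ℕ) - 1, by omega⟩⟩) +
        f s(some a, some ⟨a.1, ⟨(a.2 : ℕ) + 1, hy⟩⟩) := by
  have hd : (some ⟨a.1, ⟨(a.2 : ℕ) - 1, by omega⟩⟩ : SpV y) ≠ some ⟨a.1, ⟨(a.2 : ℕ) + 1, hy⟩⟩ :=
    some_ne_of_val (by dsimp; omega)
  rw [vertexSum, nbhd_mid a ha hy, finsum_mem_pair hd]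

lemma vertexSum_leaf (a : Σ i : Fin 3, Fin (y i)) (ha : 1 ≤ (a.2 : ℕ))
    (hy : (a.2 : ℕ) + 1 = y a.1) (f : Sym2 (SpV y) → ℕ) :
    vertexSum (spider 3 y) f (some a) =
      f s(some a, some ⟨a.1, ⟨(a.2 : ℕ) - 1, by omega⟩⟩) := by
  rw [vertexSum, nbhd_leaf a ha hy, finsum_mem_singleton]

end Stmt18
namespace Stmt18

variable {y : Fin 3 → ℕ}

lemma FF_some_none (ℓ : ℕ → ℕ → ℕ) (a : Σ i : Fin 3, Fin (y i)) (ha : (a.2 : ℕ) = 0) :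
    FF (y := y) ℓ s(some a, none) = ℓ a.1.val 0 := by
  rw [FF_mk]
  show (if (a.2 : ℕ) = 0 then ℓ a.1.val 0 else 0) = ℓ a.1.val 0
  rw [if_pos ha]

lemma FF_none_some (ℓ : ℕ → ℕ → ℕ) (a : Σ i : Fin 3, Fin (y i)) (ha : (a.2 : ℕ) = 0) :
    FF (y := y) ℓ s(none, some a) = ℓ a.1.val 0 := by
  rw [FF_mk]
  show (if (a.2 : ℕ) = 0 then ℓ a.1.val 0 else 0) = ℓ a.1.val 0
  rw [if_pos ha]

lemma FF_step (ℓ : ℕ → ℕ → ℕ) (a : Σ i : Fin 3, Fin (y i)) (k : ℕ) (hk : k < y a.1)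
    (h : (a.2 : ℕ) + 1 = k) :
    FF (y := y) ℓ s(some a, some ⟨a.1, ⟨k, hk⟩⟩) = ℓ a.1.val k := by
  rw [FF_mk]
  show gF ℓ (some a) (some ⟨a.1, ⟨k, hk⟩⟩) = ℓ a.1.val k
  rw [gF, if_pos rfl]
  dsimp
  rw [if_pos h]

lemma FF_stepdown (ℓ : ℕ → ℕ → ℕ) (a : Σ i : Fin 3, Fin (y i)) (k : ℕ) (hk : k < y a.1)
    (h : k + 1 = (a.2 : ℕ)) :
    FF (y := y) ℓ s(some a, some ⟨a.1, ⟨k, hk⟩⟩) = ℓ a.1.val (a.2 : ℕ) := by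
  rw [FF_mk]
  show gF ℓ (some a) (some ⟨a.1, ⟨k, hk⟩⟩) = ℓ a.1.val (a.2 : ℕ)
  rw [gF, if_pos rfl]
  dsimp
  rw [if_neg (by omega), if_pos h]

end Stmt18
namespace Stmt18

/-- The explicit edge labels: leg `iv ∈ {0,1,2}`, edge `j` (0-indexed from the core). -/
def lab (n m : ℕ) : ℕ → ℕ → ℕ := fun iv j =>
  if iv = 0 then (if j % 2 = 0 then n + 4*m + 2 + j / 2 else n + 1 - (j+1) / 2)
  else if iv = 1 then
    (if j = 2*m then 2*n + 4*m + 3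
     else if j % 2 = 0 then n + 2*m + 1 - j / 2 else n + 2*m + 1 + (j+1) / 2)
  else (if j % 2 = 0 then n + m + 1 - j / 2 else n + 3*m + 1 + (j+1) / 2)

/-- The expected vertex sums: leg `iv`, vertex `j` (0-indexed from the core). -/
def expSum (n m : ℕ) : ℕ → ℕ → ℕ := fun iv j =>
  if iv = 0 then (if j % 2 = 0 then 2*n + 4*m + 2 else 2*n + 4*m + 3)
  else if iv = 1 then
    (if j = 2*m then 2*n + 4*m + 3
     else if j + 1 = 2*m then 3*n + 7*m + 4
     else if j % 2 = 0 then 2*n + 4*m + 3 else 2*n + 4*m + 2)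
  else (if j = 2*m then n + 1 else if j % 2 = 0 then 2*n + 4*m + 3 else 2*n + 4*m + 2)

section Inst

variable (n m : ℕ)

lemma Yval (i : Fin 3) :
    (![2*n+1, 2*m+1, 2*m+1] : Fin 3 → ℕ) i = if (i : ℕ) = 0 then 2*n+1 else 2*m+1 := by
  fin_cases i <;> simp

variable {n m}

lemma lab_bounds (hm : 1 ≤ m) {iv j : ℕ} (hj : j < if iv = 0 then 2*n+1 else 2*m+1) :
    1 ≤ lab n m iv j ∧ lab n m iv j ≤ 2*n + 4*m + 3 := by
  unfold lab
  split_ifs at hj ⊢ <;> first | contradiction | omega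

lemma lab_inj (hm : 1 ≤ m) {iv j iv' j' : ℕ} (hiv : iv < 3) (hiv' : iv' < 3)
    (hj : j < if iv = 0 then 2*n+1 else 2*m+1) (hj' : j' < if iv' = 0 then 2*n+1 else 2*m+1)
    (h : lab n m iv j = lab n m iv' j') : iv = iv' ∧ j = j' := by
  unfold lab at h
  split_ifs at hj hj' h <;> first | contradiction | omega

lemma lab_core (hm : 1 ≤ m) : lab n m 0 0 + lab n m 1 0 + lab n m 2 0 = 3*n + 7*m + 4 := by
  unfold lab
  split_ifs <;> first | contradiction | omega

lemma lab_sum (hm : 1 ≤ m) {iv j : ℕ} (hiv : iv < 3)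
    (hj : j + 1 < if iv = 0 then 2*n+1 else 2*m+1) :
    lab n m iv j + lab n m iv (j+1) = expSum n m iv j := by
  unfold lab expSum
  split_ifs at hj ⊢ <;> first | contradiction | omega

lemma lab_leaf (hm : 1 ≤ m) {iv j : ℕ} (hiv : iv < 3)
    (hj : j + 1 = if iv = 0 then 2*n+1 else 2*m+1) :
    lab n m iv j = expSum n m iv j := by
  unfold lab expSum
  split_ifs at hj ⊢ <;> first | contradiction | omega

lemma expSum_core_ne (hm : 1 ≤ m) {iv : ℕ} (hiv : iv < 3) :
    expSum n m iv 0 ≠ 3*n + 7*m + 4 := by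
  unfold expSum
  split_ifs <;> first | contradiction | omega

lemma expSum_step_ne (hm : 1 ≤ m) {iv j : ℕ} (hiv : iv < 3)
    (hj : j + 1 < if iv = 0 then 2*n+1 else 2*m+1) :
    expSum n m iv j ≠ expSum n m iv (j+1) := by
  unfold expSum
  split_ifs at hj ⊢ <;> first | contradiction | omega

lemma expSum_mem (hm : 1 ≤ m) {iv j : ℕ} (hiv : iv < 3)
    (hj : j < if iv = 0 then 2*n+1 else 2*m+1) :
    expSum n m iv j = n + 1 ∨ expSum n m iv j = 2*n + 4*m + 2 ∨
      expSum n m iv j = 2*n + 4*m + 3 ∨ expSum n m iv j = 3*n + 7*m + 4 := by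
  unfold expSum
  split_ifs at hj ⊢ <;> first | contradiction | omega

end Inst

end Stmt18
namespace Stmt18

def YY (n m : ℕ) : Fin 3 → ℕ := ![2*n+1, 2*m+1, 2*m+1]

section Inst2

variable {n m : ℕ}

lemma YYval (i : Fin 3) : YY n m i = if (i : ℕ) = 0 then 2*n+1 else 2*m+1 := by
  have := Yval n m i
  exact this

lemma YYpos (i : Fin 3) : 0 < YY n m i := by rw [YYval]; split_ifs <;> omega

lemma vsum_none (hm : 1 ≤ m) :
    vertexSum (spider 3 (YY n m)) (FF (lab n m)) none = 3*n + 7*m + 4 := by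
  rw [vertexSum_core (YYpos 0) (YYpos 1) (YYpos 2),
    FF_none_some _ _ rfl, FF_none_some _ _ rfl, FF_none_some _ _ rfl]
  dsimp
  exact lab_core hm

lemma vsum_some (hm : 1 ≤ m) (a : Σ i : Fin 3, Fin (YY n m i)) :
    vertexSum (spider 3 (YY n m)) (FF (lab n m)) (some a) =
      expSum n m a.1.val (a.2 : ℕ) := by
  have hiv : (a.1 : ℕ) < 3 := a.1.isLt
  have hYa := YYval (n := n) (m := m) a.1
  have hjlt : (a.2 : ℕ) < YY n m a.1 := a.2.isLt
  by_cases hleaf : (a.2 : ℕ) + 1 = YY n m a.1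
  · by_cases ha : (a.2 : ℕ) = 0
    · rw [vertexSum_leaf0 a ha (by omega), FF_some_none _ a ha, ← ha]
      exact lab_leaf hm hiv (by omega)
    · rw [vertexSum_leaf a (by omega) hleaf,
        FF_stepdown _ a ((a.2 : ℕ) - 1) (by omega) (by omega)]
      exact lab_leaf hm hiv (by omega)
  · by_cases ha : (a.2 : ℕ) = 0
    · rw [vertexSum_start a ha (by omega), FF_some_none _ a ha,
        FF_step _ a 1 (by omega) (by omega), ha]
      exact lab_sum hm hiv (by omega)
    · rw [vertexSum_mid a (by omega) (by omega),
        FF_stepdown _ a ((a.2 : ℕ) - 1) (by omega) (by omega),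
        FF_step _ a ((a.2 : ℕ) + 1) (by omega) (by omega)]
      exact lab_sum hm hiv (by omega)

end Inst2

end Stmt18
namespace Stmt18

section Inst3

variable {n m : ℕ}

lemma YYncard : (spider 3 (YY n m)).edgeSet.ncard = 2*n + 4*m + 3 := by
  rw [edgeSet_ncard]
  have e0 := YYval (n := n) (m := m) 0
  have e1 := YYval (n := n) (m := m) 1
  have e2 := YYval (n := n) (m := m) 2
  norm_num at e0 e1 e2
  omega

lemma fin3_cases (i : Fin 3) : (i : ℕ) = 0 ∨ (i : ℕ) = 1 ∨ (i : ℕ) = 2 := by omega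

lemma d2_bound (d : Σ i : Fin 3, Fin (YY n m i)) :
    (d.2 : ℕ) < if (d.1 : ℕ) = 0 then 2*n+1 else 2*m+1 :=
  Nat.lt_of_lt_of_eq d.2.isLt (YYval d.1)

lemma maps_to (hm : 1 ≤ m) :
    Set.MapsTo (FF (lab n m)) (spider 3 (YY n m)).edgeSet (Set.Icc 1 (2*n + 4*m + 3)) := by
  intro e he
  rw [edgeSet_eq] at he
  obtain ⟨d, rfl⟩ := he
  rw [FF_D]
  have hb := lab_bounds (n := n) hm (d2_bound d)
  exact Set.mem_Icc.2 ⟨hb.1, hb.2⟩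

lemma inj_on (hm : 1 ≤ m) :
    Set.InjOn (FF (lab n m)) (spider 3 (YY n m)).edgeSet := by
  intro e he e' he' hfe
  rw [edgeSet_eq] at he he'
  obtain ⟨d, rfl⟩ := he
  obtain ⟨d', rfl⟩ := he'
  rw [FF_D, FF_D] at hfe
  obtain ⟨hi, hj⟩ := lab_inj hm d.1.isLt d'.1.isLt (d2_bound d) (d2_bound d') hfe
  congr 1
  exact sigma_ext (Fin.ext hi) hj

lemma bij_on (hm : 1 ≤ m) :
    Set.BijOn (FF (lab n m)) (spider 3 (YY n m)).edgeSet (Set.Icc 1 (2*n + 4*m + 3)) := by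
  refine ⟨maps_to hm, inj_on hm, ?_⟩
  have himg : FF (lab n m) '' (spider 3 (YY n m)).edgeSet ⊆ Set.Icc 1 (2*n + 4*m + 3) :=
    Set.MapsTo.image_subset (maps_to hm)
  have hc1 : (FF (lab n m) '' (spider 3 (YY n m)).edgeSet).ncard = 2*n + 4*m + 3 := by
    rw [Set.ncard_image_of_injOn (inj_on hm), YYncard]
  have hc2 : (Set.Icc 1 (2*n + 4*m + 3)).ncard = 2*n + 4*m + 3 := by
    rw [← Finset.coe_Icc, Set.ncard_coe_finset, Nat.card_Icc]
    omega
  have heq : FF (lab n m) '' (spider 3 (YY n m)).edgeSet = Set.Icc 1 (2*n + 4*m + 3) :=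
    Set.eq_of_subset_of_ncard_le himg (by rw [hc1, hc2]) (Set.finite_Icc _ _)
  rw [Set.SurjOn, heq]

lemma range_vsum (hm : 1 ≤ m) :
    Set.range (vertexSum (spider 3 (YY n m)) (FF (lab n m))) =
      {n + 1, 2*n + 4*m + 2, 2*n + 4*m + 3, 3*n + 7*m + 4} := by
  ext v
  constructor
  · rintro ⟨x, rfl⟩
    cases x with
    | none =>
      rw [vsum_none hm]
      simp
    | some a =>
      rw [vsum_some hm a]
      rcases expSum_mem hm a.1.isLt (d2_bound a) with h | h | h | h <;> rw [h] <;> simp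
  · intro hv
    simp only [Set.mem_insert_iff, Set.mem_singleton_iff] at hv
    rcases hv with rfl | rfl | rfl | rfl
    · refine ⟨some ⟨2, ⟨2*m, by rw [YYval]; norm_num⟩⟩, ?_⟩
      rw [vsum_some hm]
      unfold expSum
      norm_num
    · refine ⟨some ⟨0, ⟨2*n, by rw [YYval]; norm_num⟩⟩, ?_⟩
      rw [vsum_some hm]
      unfold expSum
      norm_num
    · refine ⟨some ⟨1, ⟨2*m, by rw [YYval]; norm_num⟩⟩, ?_⟩
      rw [vsum_some hm]
      unfold expSum
      norm_num
    · exact ⟨none, vsum_none hm⟩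

lemma ncard_four {a b c d : ℕ} (h1 : a ≠ b) (h2 : a ≠ c) (h3 : a ≠ d) (h4 : b ≠ c)
    (h5 : b ≠ d) (h6 : c ≠ d) : ({a, b, c, d} : Set ℕ).ncard = 4 := by
  have hst : ({a, b, c, d} : Set ℕ) = (({a, b, c, d} : Finset ℕ) : Set ℕ) := by simp
  have m1 : a ∉ ({b, c, d} : Finset ℕ) := by
    simp only [Finset.mem_insert, Finset.mem_singleton]
    push_neg
    exact ⟨h1, h2, h3⟩
  have m2 : b ∉ ({c, d} : Finset ℕ) := by
    simp only [Finset.mem_insert, Finset.mem_singleton]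
    push_neg
    exact ⟨h4, h5⟩
  have m3 : c ∉ ({d} : Finset ℕ) := by
    simp only [Finset.mem_singleton]
    exact h6
  rw [hst, Set.ncard_coe_finset, Finset.card_insert_of_notMem m1,
    Finset.card_insert_of_notMem m2, Finset.card_insert_of_notMem m3,
    Finset.card_singleton]

lemma colorCount_four (hm : 1 ≤ m) :
    colorCount (spider 3 (YY n m)) (FF (lab n m)) = 4 := by
  rw [colorCount, range_vsum hm]
  exact ncard_four (by omega) (by omega) (by omega) (by omega) (by omega) (by omega)

lemma adj_ne (hm : 1 ≤ m) ⦃x x' : SpV (YY n m)⦄ (hadjxy : (spider 3 (YY n m)).Adj x x') :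
    vertexSum (spider 3 (YY n m)) (FF (lab n m)) x ≠
      vertexSum (spider 3 (YY n m)) (FF (lab n m)) x' := by
  cases x with
  | none =>
    cases x' with
    | none => exact absurd hadjxy not_adj_none_none
    | some a =>
      rw [adj_none_some] at hadjxy
      rw [vsum_none hm, vsum_some hm, hadjxy]
      exact (expSum_core_ne hm a.1.isLt).symm
  | some a =>
    cases x' with
    | none =>
      rw [adj_some_none] at hadjxy
      rw [vsum_none hm, vsum_some hm, hadjxy]
      exact expSum_core_ne hm a.1.isLt
    | some b =>
      rw [adj_some_some] at hadjxy
      obtain ⟨h1, h2 | h2⟩ := hadjxy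
      · rw [vsum_some hm, vsum_some hm, ← congrArg Fin.val h1, ← h2]
        refine expSum_step_ne hm a.1.isLt ?_
        have hb := d2_bound b
        have hv : (a.1 : ℕ) = (b.1 : ℕ) := congrArg Fin.val h1
        split_ifs at hb ⊢ <;> omega
      · rw [vsum_some hm, vsum_some hm, ← congrArg Fin.val h1, ← h2]
        refine (expSum_step_ne hm a.1.isLt ?_).symm
        have hb := d2_bound a
        split_ifs at hb ⊢ <;> omega

lemma upper_mem (hm : 1 ≤ m) :
    IsLocalAntimagic (spider 3 (YY n m)) (FF (lab n m)) ∧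
      colorCount (spider 3 (YY n m)) (FF (lab n m)) = 4 := by
  refine ⟨⟨?_, fun x x' h => adj_ne hm h⟩, colorCount_four hm⟩
  rw [YYncard]
  exact bij_on hm

end Inst3

end Stmt18
namespace Stmt18

variable {y : Fin 3 → ℕ}

lemma vertexSum_leafD (a : Σ i : Fin 3, Fin (y i)) (hy : (a.2 : ℕ) + 1 = y a.1)
    (f : Sym2 (SpV y) → ℕ) :
    vertexSum (spider 3 y) f (some a) = f (D a) := by
  by_cases h : (a.2 : ℕ) = 0
  · rw [vertexSum_leaf0 a h (by omega), D_val0 a h]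
    exact congrArg f Sym2.eq_swap
  · rw [vertexSum_leaf a (by omega) hy, D_valpos a h]
    exact congrArg f Sym2.eq_swap

lemma D_succ (i : Fin 3) (k : ℕ) (hk : k + 1 < y i) (hk' : k < y i) :
    D (y := y) ⟨i, ⟨k+1, hk⟩⟩ = s(some ⟨i, ⟨k, hk'⟩⟩, some ⟨i, ⟨k+1, hk⟩⟩) := by
  rw [D_valpos _ (by dsimp; omega)]
  rfl

lemma vertexSum_start_D (a : Σ i : Fin 3, Fin (y i)) (ha : (a.2 : ℕ) = 0) (hy : 2 ≤ y a.1)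
    (f : Sym2 (SpV y) → ℕ) :
    vertexSum (spider 3 y) f (some a) =
      f (D a) + f (D ⟨a.1, ⟨1, by omega⟩⟩) := by
  rw [vertexSum_start a ha hy]
  congr 1
  · rw [D_val0 a ha]
    exact congrArg f Sym2.eq_swap
  · rw [D_succ a.1 0 (by omega) (by omega)]
    rw [show (some ⟨a.1, ⟨0, by omega⟩⟩ : SpV y) = some a from (some_eq_mk (by omega) rfl ha).symm]

lemma vertexSum_mid_D (a : Σ i : Fin 3, Fin (y i)) (ha : 1 ≤ (a.2 : ℕ))
    (hy : (a.2 : ℕ) + 1 < y a.1) (f : Sym2 (SpV y) → ℕ) :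
    vertexSum (spider 3 y) f (some a) =
      f (D a) + f (D ⟨a.1, ⟨(a.2 : ℕ) + 1, hy⟩⟩) := by
  rw [vertexSum_mid a ha hy]
  congr 1
  rw [D_valpos a (by omega)]
  exact congrArg f Sym2.eq_swap

/-- For any edge there is a vertex whose sum strictly exceeds that edge's label. -/
lemma exists_big (hy : ∀ i, 0 < y i) (f : Sym2 (SpV y) → ℕ)
    (hone : ∀ d, 1 ≤ f (D (y := y) d)) (d : Σ i : Fin 3, Fin (y i)) :
    ∃ x, f (D d) + 1 ≤ vertexSum (spider 3 y) f x := by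
  by_cases hd0 : (d.2 : ℕ) = 0
  · refine ⟨none, ?_⟩
    rw [vertexSum_core (hy 0) (hy 1) (hy 2) f]
    have hD0 : ∀ (i : Fin 3) (h : 0 < y i),
        s(none, (some ⟨i, ⟨0, h⟩⟩ : SpV y)) = D ⟨i, ⟨0, h⟩⟩ := fun i h => (D_val0 _ rfl).symm
    rw [hD0 0 (hy 0), hD0 1 (hy 1), hD0 2 (hy 2)]
    have h0 := hone ⟨0, ⟨0, hy 0⟩⟩
    have h1 := hone ⟨1, ⟨0, hy 1⟩⟩
    have h2 := hone ⟨2, ⟨0, hy 2⟩⟩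
    rcases fin3_cases d.1 with h | h | h
    · have he : (⟨0, ⟨0, hy 0⟩⟩ : Σ i : Fin 3, Fin (y i)) = d :=
        sigma_ext (Fin.ext (by simpa using h.symm)) (by simpa using hd0.symm)
      rw [he] at h0 ⊢
      omega
    · have he : (⟨1, ⟨0, hy 1⟩⟩ : Σ i : Fin 3, Fin (y i)) = d :=
        sigma_ext (Fin.ext (by simpa using h.symm)) (by simpa using hd0.symm)
      rw [he] at h1 ⊢
      omega
    · have he : (⟨2, ⟨0, hy 2⟩⟩ : Σ i : Fin 3, Fin (y i)) = d :=
        sigma_ext (Fin.ext (by simpa using h.symm)) (by simpa using hd0.symm)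
      rw [he] at h2 ⊢
      omega
  · have hlt := d.2.isLt
    set a : Σ i : Fin 3, Fin (y i) := ⟨d.1, ⟨(d.2 : ℕ) - 1, by omega⟩⟩ with hadef
    have haval : (a.2 : ℕ) = (d.2 : ℕ) - 1 := rfl
    have hafst : a.1 = d.1 := rfl
    have hyy : y a.1 = y d.1 := congrArg y hafst
    refine ⟨some a, ?_⟩
    by_cases hd1 : (d.2 : ℕ) = 1
    · rw [vertexSum_start_D a (by omega) (by omega) f]
      have he : (⟨a.1, ⟨1, by omega⟩⟩ : Σ i : Fin 3, Fin (y i)) = d :=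
        sigma_ext hafst (by dsimp; omega)
      rw [he]
      have := hone a
      omega
    · rw [vertexSum_mid_D a (by omega) (by omega) f]
      have he : (⟨a.1, ⟨(a.2 : ℕ) + 1, by omega⟩⟩ : Σ i : Fin 3, Fin (y i)) = d :=
        sigma_ext hafst (by dsimp; omega)
      rw [he]
      have := hone a
      omega

end Stmt18
namespace Stmt18

section Final

variable {n m : ℕ}

lemma lower_bound (hm : 1 ≤ m) (f : Sym2 (SpV (YY n m)) → ℕ)
    (hf : IsLocalAntimagic (spider 3 (YY n m)) f) :
    4 ≤ colorCount (spider 3 (YY n m)) f := by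
  obtain ⟨hbij, -⟩ := hf
  rw [YYncard] at hbij
  have hmemD : ∀ d : Σ i : Fin 3, Fin (YY n m i), D d ∈ (spider 3 (YY n m)).edgeSet := by
    intro d
    rw [edgeSet_eq]
    exact ⟨d, rfl⟩
  have hone : ∀ d, 1 ≤ f (D (y := YY n m) d) := fun d =>
    (Set.mem_Icc.1 (hbij.mapsTo (hmemD d))).1
  have hleq : ∀ d, f (D (y := YY n m) d) ≤ 2*n + 4*m + 3 := fun d =>
    (Set.mem_Icc.1 (hbij.mapsTo (hmemD d))).2
  let L : Fin 3 → Σ i : Fin 3, Fin (YY n m i) := fun i =>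
    ⟨i, ⟨YY n m i - 1, by have := YYpos (n := n) (m := m) i; omega⟩⟩
  have hLsum : ∀ i, vertexSum (spider 3 (YY n m)) f (some (L i)) = f (D (L i)) := by
    intro i
    refine vertexSum_leafD (L i) ?_ f
    show (YY n m i - 1) + 1 = YY n m i
    have := YYpos (n := n) (m := m) i
    omega
  have hLne : ∀ i i' : Fin 3, i ≠ i' → f (D (L i)) ≠ f (D (L i')) := by
    intro i i' hne heq
    have h1 := hbij.injOn (hmemD (L i)) (hmemD (L i')) heq
    have h2 := D_inj h1
    exact hne (congrArg Sigma.fst h2)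
  obtain ⟨e, he, hfe⟩ := hbij.surjOn (Set.mem_Icc.2 ⟨by omega, le_rfl⟩ :
    (2*n + 4*m + 3) ∈ Set.Icc 1 (2*n + 4*m + 3))
  rw [edgeSet_eq] at he
  obtain ⟨d, rfl⟩ := he
  obtain ⟨x, hx⟩ := exists_big YYpos f hone d
  rw [hfe] at hx
  have hmemR : ∀ i, f (D (L i)) ∈ Set.range (vertexSum (spider 3 (YY n m)) f) := fun i =>
    ⟨some (L i), hLsum i⟩
  have hsub : ({f (D (L 0)), f (D (L 1)), f (D (L 2)),
      vertexSum (spider 3 (YY n m)) f x} : Set ℕ) ⊆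
        Set.range (vertexSum (spider 3 (YY n m)) f) := by
    intro v hv
    simp only [Set.mem_insert_iff, Set.mem_singleton_iff] at hv
    rcases hv with rfl | rfl | rfl | rfl
    · exact hmemR 0
    · exact hmemR 1
    · exact hmemR 2
    · exact ⟨x, rfl⟩
  have hcard : ({f (D (L 0)), f (D (L 1)), f (D (L 2)),
      vertexSum (spider 3 (YY n m)) f x} : Set ℕ).ncard = 4 := by
    refine ncard_four (hLne 0 1 (by decide)) (hLne 0 2 (by decide)) ?_
      (hLne 1 2 (by decide)) ?_ ?_
    · have := hleq (L 0); omega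
    · have := hleq (L 1); omega
    · have := hleq (L 2); omega
  show 4 ≤ (Set.range (vertexSum (spider 3 (YY n m)) f)).ncard
  calc 4 = _ := hcard.symm
    _ ≤ _ := Set.ncard_le_ncard hsub (Set.finite_range _)

end Final

end Stmt18

theorem stmt18 (n m : ℕ) (hm : 1 ≤ m) :
    chiLA (spider 3 ![2 * n + 1, 2 * m + 1, 2 * m + 1]) = 4 := by
  show chiLA (spider 3 (Stmt18.YY n m)) = 4
  have h4 : 4 ∈ {k | ∃ f : Sym2 (Stmt18.SpV (Stmt18.YY n m)) → ℕ,
      IsLocalAntimagic (spider 3 (Stmt18.YY n m)) f ∧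
        colorCount (spider 3 (Stmt18.YY n m)) f = k} :=
    ⟨Stmt18.FF (Stmt18.lab n m), (Stmt18.upper_mem hm).1, (Stmt18.upper_mem hm).2⟩
  have hlb : ∀ k ∈ {k | ∃ f : Sym2 (Stmt18.SpV (Stmt18.YY n m)) → ℕ,
      IsLocalAntimagic (spider 3 (Stmt18.YY n m)) f ∧
        colorCount (spider 3 (Stmt18.YY n m)) f = k}, 4 ≤ k := by
    rintro k ⟨f, hf, rfl⟩
    exact Stmt18.lower_bound hm f hf
  exact le_antisymm (Nat.sInf_le h4) (le_csInf ⟨4, h4⟩ hlb)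
end
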